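/- arXiv:1805.11316 — 2 statements merged into one kernel-verified Lean document; each statement's English description precedes it below -/
import Mathlib

section
/- For any Λ < 1 and every b ∈ L^p(I) (1 ≤ p ≤ ∞), (1 + Λ)‖b − (0 *_T b)‖_p ≥ ‖b‖_p. Consequently, the operator I − P⁰₁ : L^p(I) → L^p(I), b ↦ b − (0 *_T b), is injective and has closed range in L^p(I). -/
open MeasureTheory ENNReal

/-!
On the piece `I n`, the map `Linv x n` pushes Lebesgue measure forward to `aₙ` times Lebesgue
measure on `I`, where `aₙ = |I n| / |I|` is the slope of `Lₙ` and `∑ aₙ = 1`. Hence if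
`w = (αₙ ∘ Lₙ⁻¹) · (g ∘ Lₙ⁻¹)` on every piece, then `‖w‖_p ≤ Λ ‖g‖_p`: for `p < ∞` because
`∫_{I n} |w|^p ≤ Λ^p aₙ ∫_I |g|^p`, for `p = ∞` directly.

The equation of `T_{0,b}` is affine in `(b, h)`, so for `P = P⁰₁` the difference `P b - P b'`
satisfies it with `g = (P b - P b') - (b - b')`, giving
`‖P b - P b'‖ ≤ Λ ‖(b - b') - (P b - P b')‖`. By the triangle inequality `I - P` is then
antilipschitz with constant `1 + Λ`, and (as `Λ < 1`) `P` is Lipschitz; an antilipschitz,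
uniformly continuous map on the complete space `L^p` is injective with closed range.
-/

noncomputable section

/-- The inverse of the increasing affine map `L n` sending `[x 0, x N]` onto
`[x n, x (n+1)]` (so `L n (x 0) = x n.castSucc` and `L n (x N) = x n.succ`). -/
def Linv {N : ℕ} (x : Fin (N + 1) → ℝ) (n : Fin N) (y : ℝ) : ℝ :=
  x 0 + (y - x n.castSucc) * (x (Fin.last N) - x 0) / (x n.succ - x n.castSucc)

/-- The subinterval `I n` of the partition: `[x 0, x 1]` for `n = 0` and
`(x n, x (n+1)]` otherwise. -/
def subInt {N : ℕ} (x : Fin (N + 1) → ℝ) (n : Fin N) : Set ℝ :=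
  if n.val = 0 then Set.Icc (x n.castSucc) (x n.succ)
  else Set.Ioc (x n.castSucc) (x n.succ)

/-- `h` is the image of `g` under the Read–Bajraktarević operator `T_{f,b}` with
scale functions `α`, almost everywhere: on each `I n`,
`h = f + (α n ∘ Lₙ⁻¹) · ((g - b) ∘ Lₙ⁻¹)`. -/
def RBEq {N : ℕ} (μ : Measure ℝ) (x : Fin (N + 1) → ℝ) (α : Fin N → ℝ → ℝ)
    (f b g h : ℝ → ℝ) : Prop :=
  ∀ n : Fin N, ∀ᵐ t ∂μ, t ∈ subInt x n →
    h t = f t + α n (Linv x n t) * (g (Linv x n t) - b (Linv x n t))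

/-- `h` satisfies the self-referential equation of `T_{f,b}`, i.e. `h` is a fixed
point of `T_{f,b}`; `h` is then the fractal convolution `f *_T b`. -/
def SelfRef {N : ℕ} (μ : Measure ℝ) (x : Fin (N + 1) → ℝ) (α : Fin N → ℝ → ℝ)
    (f b h : ℝ → ℝ) : Prop :=
  RBEq μ x α f b h h

theorem Fin.sum_succ_sub_castSucc {M : Type*} [AddCommGroup M] {N : ℕ} (f : Fin (N + 1) → M) :
    ∑ n : Fin N, (f n.succ - f n.castSucc) = f (Fin.last N) - f 0 := by
  cases N with
  | zero => simp
  | succ N =>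
    simpa [← Fin.top_eq_last, Finset.Iic_top, Finset.sum_sub_distrib] using
      Fin.sum_Iic_sub (Fin.last N) f

theorem MeasureTheory.Lp.ae_norm_le_norm {α E : Type*} [MeasurableSpace α] {μ : Measure α}
    [NormedAddCommGroup E] (f : Lp E ∞ μ) : ∀ᵐ y ∂μ, ‖f y‖ ≤ ‖f‖ := by
  filter_upwards [enorm_ae_le_eLpNormEssSup f μ] with y hy
  rwa [← eLpNorm_exponent_top, ← Lp.enorm_def, ← ofReal_norm, ← ofReal_norm,
    ofReal_le_ofReal_iff (norm_nonneg _)] at hy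

namespace FractalConvolution

open Set

section Partition

variable {N : ℕ} {x : Fin (N + 1) → ℝ}

theorem subInt_subset_Icc (n : Fin N) : subInt x n ⊆ Icc (x n.castSucc) (x n.succ) := by
  unfold subInt
  split
  · exact subset_rfl
  · exact Ioc_subset_Icc_self

theorem Ioc_subset_subInt (n : Fin N) : Ioc (x n.castSucc) (x n.succ) ⊆ subInt x n := by
  unfold subInt
  split
  · exact Ioc_subset_Icc_self
  · exact subset_rfl

theorem measurableSet_subInt (n : Fin N) : MeasurableSet (subInt x n) := by
  unfold subInt
  split
  · exact measurableSet_Icc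
  · exact measurableSet_Ioc

theorem x_zero_lt_x_last (hx : StrictMono x) (hN : 0 < N) : x 0 < x (Fin.last N) :=
  hx (by simp [Fin.lt_def, hN])

theorem subInt_subset_Icc_zero_last (hx : StrictMono x) (n : Fin N) :
    subInt x n ⊆ Icc (x 0) (x (Fin.last N)) :=
  (subInt_subset_Icc n).trans
    (Icc_subset_Icc (hx.monotone (Fin.zero_le _)) (hx.monotone (Fin.le_last _)))

theorem iUnion_subInt (hx : StrictMono x) (hN : 0 < N) :
    ⋃ n, subInt x n = Icc (x 0) (x (Fin.last N)) := by
  refine (iUnion_subset (subInt_subset_Icc_zero_last hx)).antisymm fun t ht => ?_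
  rcases ht.1.eq_or_lt with rfl | ht0
  · refine mem_iUnion.2 ⟨⟨0, hN⟩, ?_⟩
    simp [subInt, hx.le_iff_le]
  · have ht' : t ∈ ⋃ i ∈ Ico 0 (Fin.last N), Ioc (x i) (x (Order.succ i)) := by
      rw [hx.monotone.biUnion_Ico_Ioc_map_succ]
      exact ⟨ht0, ht.2⟩
    obtain ⟨i, hi, hti⟩ := mem_iUnion₂.1 ht'
    refine mem_iUnion.2 ⟨i.castPred hi.2.ne, Ioc_subset_subInt _ ?_⟩
    rwa [← Fin.orderSucc_castSucc, Fin.castSucc_castPred]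

theorem pairwise_disjoint_subInt (hx : StrictMono x) :
    Pairwise (Function.onFun Disjoint (subInt x)) := by
  refine (pairwise_disjoint_on _).2 fun n m hnm => disjoint_left.2 fun t htn htm => ?_
  have hm : subInt x m = Ioc (x m.castSucc) (x m.succ) := if_neg (by omega)
  rw [hm] at htm
  have : x n.succ ≤ x m.castSucc := hx.monotone (Fin.succ_le_castSucc_iff.2 hnm)
  linarith [(subInt_subset_Icc n htn).2, htm.1]

theorem restrict_Icc_eq_sum_restrict_subInt (hx : StrictMono x) (hN : 0 < N) :
    volume.restrict (Icc (x 0) (x (Fin.last N))) =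
      Measure.sum fun n => volume.restrict (subInt x n) := by
  rw [← iUnion_subInt hx hN,
    Measure.restrict_iUnion (pairwise_disjoint_subInt hx) measurableSet_subInt]

theorem restrict_Icc_restrict_subInt (hx : StrictMono x) (n : Fin N) :
    (volume.restrict (Icc (x 0) (x (Fin.last N)))).restrict (subInt x n) =
      volume.restrict (subInt x n) := by
  rw [Measure.restrict_restrict (measurableSet_subInt n),
    inter_eq_self_of_subset_left (subInt_subset_Icc_zero_last hx n)]

theorem ae_restrict_subInt_of_ae_imp (hx : StrictMono x) {n : Fin N} {P : ℝ → Prop}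
    (h : ∀ᵐ t ∂volume.restrict (Icc (x 0) (x (Fin.last N))), t ∈ subInt x n → P t) :
    ∀ᵐ t ∂volume.restrict (subInt x n), P t := by
  rw [← restrict_Icc_restrict_subInt hx n]
  exact (ae_restrict_iff' (measurableSet_subInt n)).2 h

end Partition

section Rescaling

variable {N : ℕ} {x : Fin (N + 1) → ℝ}

/-- The slope `aₙ` of `Lₙ`. -/
def affineSlope (x : Fin (N + 1) → ℝ) (n : Fin N) : ℝ :=
  (x n.succ - x n.castSucc) / (x (Fin.last N) - x 0)

theorem affineSlope_pos (hx : StrictMono x) (hN : 0 < N) (n : Fin N) : 0 < affineSlope x n :=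
  div_pos (sub_pos.2 (hx Fin.castSucc_lt_succ)) (sub_pos.2 (x_zero_lt_x_last hx hN))

theorem sum_affineSlope (hx : StrictMono x) (hN : 0 < N) :
    ∑ n, ENNReal.ofReal (affineSlope x n) = 1 := by
  rw [← ENNReal.ofReal_sum_of_nonneg fun n _ => (affineSlope_pos hx hN n).le]
  simp only [affineSlope, ← Finset.sum_div, Fin.sum_succ_sub_castSucc]
  rw [div_self (sub_pos.2 (x_zero_lt_x_last hx hN)).ne', ENNReal.ofReal_one]

theorem Linv_eq_comp (n : Fin N) :
    Linv x n = (· + (x 0 - (affineSlope x n)⁻¹ * x n.castSucc)) ∘ ((affineSlope x n)⁻¹ * ·) := by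
  ext t
  simp only [Linv, affineSlope, inv_div, Function.comp_apply]
  ring

theorem measurable_Linv (n : Fin N) : Measurable (Linv x n) := by
  unfold Linv
  fun_prop

theorem map_Linv_volume (hx : StrictMono x) (hN : 0 < N) (n : Fin N) :
    volume.map (Linv x n) = ENNReal.ofReal (affineSlope x n) • volume := by
  have ha := affineSlope_pos hx hN n
  rw [Linv_eq_comp, ← Measure.map_map (measurable_add_const _) (measurable_const_mul _),
    Real.map_volume_mul_left (inv_ne_zero ha.ne'), Measure.map_smul, map_add_right_eq_self,
    inv_inv, abs_of_pos ha]

theorem Linv_mem_Icc (hx : StrictMono x) (hN : 0 < N) {n : Fin N} {t : ℝ} (ht : t ∈ subInt x n) :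
    Linv x n t ∈ Icc (x 0) (x (Fin.last N)) := by
  obtain ⟨h₁, h₂⟩ := subInt_subset_Icc n ht
  have hlen := sub_pos.2 (hx (Fin.castSucc_lt_succ (i := n)))
  have hrange := sub_pos.2 (x_zero_lt_x_last hx hN)
  have hfrac : (t - x n.castSucc) / (x n.succ - x n.castSucc) ∈ Icc (0 : ℝ) 1 :=
    ⟨div_nonneg (by linarith) hlen.le, (div_le_one hlen).2 (by linarith)⟩
  simp only [Linv, mul_comm _ (x (Fin.last N) - x 0), mul_div_assoc, mem_Icc]
  constructor <;> nlinarith [hfrac.1, hfrac.2]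

theorem map_Linv_restrict_subInt_le (hx : StrictMono x) (hN : 0 < N) (n : Fin N) :
    (volume.restrict (subInt x n)).map (Linv x n) ≤
      ENNReal.ofReal (affineSlope x n) • volume.restrict (Icc (x 0) (x (Fin.last N))) :=
  calc (volume.restrict (subInt x n)).map (Linv x n)
      ≤ (volume.restrict (Linv x n ⁻¹' Icc (x 0) (x (Fin.last N)))).map (Linv x n) :=
        Measure.map_mono (Measure.restrict_mono (fun _ => Linv_mem_Icc hx hN) le_rfl)
          (measurable_Linv n)
    _ = ENNReal.ofReal (affineSlope x n) • volume.restrict (Icc (x 0) (x (Fin.last N))) := by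
        rw [← Measure.restrict_map (measurable_Linv n) measurableSet_Icc, map_Linv_volume hx hN,
          Measure.restrict_smul]

theorem quasiMeasurePreserving_Linv (hx : StrictMono x) (hN : 0 < N) (n : Fin N) :
    Measure.QuasiMeasurePreserving (Linv x n) (volume.restrict (subInt x n))
      (volume.restrict (Icc (x 0) (x (Fin.last N)))) :=
  ⟨measurable_Linv n,
    Measure.absolutelyContinuous_of_le_smul (map_Linv_restrict_subInt_le hx hN n)⟩

end Rescaling

section Estimates

variable {N : ℕ} {x : Fin (N + 1) → ℝ}

theorem lintegral_le_of_le_mul_comp_Linv (hx : StrictMono x) (hN : 0 < N) {W F : ℝ → ℝ≥0∞}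
    {K : ℝ≥0∞} (hF : AEMeasurable F (volume.restrict (Icc (x 0) (x (Fin.last N)))))
    (hW : ∀ n, ∀ᵐ t ∂volume.restrict (subInt x n), W t ≤ K * F (Linv x n t)) :
    ∫⁻ t in Icc (x 0) (x (Fin.last N)), W t ≤ K * ∫⁻ t in Icc (x 0) (x (Fin.last N)), F t := by
  have hpiece : ∀ n, ∫⁻ t in subInt x n, W t ≤
      K * (ENNReal.ofReal (affineSlope x n) * ∫⁻ t in Icc (x 0) (x (Fin.last N)), F t) := by
    intro n
    have hL := quasiMeasurePreserving_Linv hx hN n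
    calc ∫⁻ t in subInt x n, W t
        ≤ ∫⁻ t in subInt x n, K * F (Linv x n t) := lintegral_mono_ae (hW n)
      _ = K * ∫⁻ t, F t ∂(volume.restrict (subInt x n)).map (Linv x n) := by
          rw [lintegral_const_mul'' K (f := fun t => F (Linv x n t))
              (hF.comp_quasiMeasurePreserving hL),
            lintegral_map' (hF.mono_ac hL.absolutelyContinuous) hL.aemeasurable]
      _ ≤ K * (ENNReal.ofReal (affineSlope x n) * ∫⁻ t in Icc (x 0) (x (Fin.last N)), F t) := by
          grw [lintegral_mono' (map_Linv_restrict_subInt_le hx hN n) le_rfl,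
            lintegral_smul_measure, smul_eq_mul]
  calc ∫⁻ t in Icc (x 0) (x (Fin.last N)), W t
      = ∑ n, ∫⁻ t in subInt x n, W t := by
        rw [restrict_Icc_eq_sum_restrict_subInt hx hN, lintegral_sum_measure, tsum_fintype]
    _ ≤ ∑ n, K * (ENNReal.ofReal (affineSlope x n) * ∫⁻ t in Icc (x 0) (x (Fin.last N)), F t) :=
        Finset.sum_le_sum fun n _ => hpiece n
    _ = K * ∫⁻ t in Icc (x 0) (x (Fin.last N)), F t := by
        rw [← Finset.mul_sum, ← Finset.sum_mul, sum_affineSlope hx hN, one_mul]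

theorem essSup_le_of_le_mul_comp_Linv (hx : StrictMono x) (hN : 0 < N) {W F : ℝ → ℝ≥0∞}
    {K : ℝ≥0∞} (hW : ∀ n, ∀ᵐ t ∂volume.restrict (subInt x n), W t ≤ K * F (Linv x n t)) :
    essSup W (volume.restrict (Icc (x 0) (x (Fin.last N)))) ≤
      K * essSup F (volume.restrict (Icc (x 0) (x (Fin.last N)))) := by
  have hpiece : ∀ n, ∀ᵐ t ∂volume.restrict (subInt x n),
      W t ≤ K * essSup F (volume.restrict (Icc (x 0) (x (Fin.last N)))) := fun n => by
    filter_upwards [hW n, (quasiMeasurePreserving_Linv hx hN n).ae (ENNReal.ae_le_essSup F)]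
      with t hWt hFt
    exact hWt.trans (mul_le_mul_right hFt K)
  have hall := Measure.ae_sum_iff.2 hpiece
  rw [← restrict_Icc_eq_sum_restrict_subInt hx hN] at hall
  exact essSup_le_of_ae_le _ hall

theorem eLpNorm_le_mul_eLpNorm_of_eq_mul_comp_Linv (hx : StrictMono x) (hN : 0 < N)
    {p : ℝ≥0∞} {α : Fin N → ℝ → ℝ} {K : ℝ≥0∞}
    (hα : ∀ n, ∀ᵐ y ∂volume.restrict (Icc (x 0) (x (Fin.last N))), ‖α n y‖ₑ ≤ K)
    {w g : ℝ → ℝ} (hg : AEStronglyMeasurable g (volume.restrict (Icc (x 0) (x (Fin.last N)))))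
    (hw : ∀ n, ∀ᵐ t ∂volume.restrict (Icc (x 0) (x (Fin.last N))),
      t ∈ subInt x n → w t = α n (Linv x n t) * g (Linv x n t)) :
    eLpNorm w p (volume.restrict (Icc (x 0) (x (Fin.last N)))) ≤
      K * eLpNorm g p (volume.restrict (Icc (x 0) (x (Fin.last N)))) := by
  have hpt : ∀ n, ∀ᵐ t ∂volume.restrict (subInt x n), ‖w t‖ₑ ≤ K * ‖g (Linv x n t)‖ₑ := by
    intro n
    filter_upwards [ae_restrict_subInt_of_ae_imp hx (hw n),
      (quasiMeasurePreserving_Linv hx hN n).ae (hα n)] with t hwt hαt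
    rw [hwt, enorm_mul]
    exact mul_le_mul_left hαt _
  rcases eq_or_ne p 0 with rfl | hp0
  · simp
  rcases eq_or_ne p ∞ with rfl | hptop
  · simpa only [eLpNorm_exponent_top, eLpNormEssSup] using
      essSup_le_of_le_mul_comp_Linv hx hN hpt
  have hq : 0 < p.toReal := ENNReal.toReal_pos hp0 hptop
  have hpow : ∀ n, ∀ᵐ t ∂volume.restrict (subInt x n),
      ‖w t‖ₑ ^ p.toReal ≤ K ^ p.toReal * ‖g (Linv x n t)‖ₑ ^ p.toReal := fun n =>
    (hpt n).mono fun t ht => (ENNReal.rpow_le_rpow ht hq.le).trans_eq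
      (ENNReal.mul_rpow_of_nonneg _ _ hq.le)
  rw [eLpNorm_eq_lintegral_rpow_enorm_toReal hp0 hptop,
    eLpNorm_eq_lintegral_rpow_enorm_toReal hp0 hptop]
  calc (∫⁻ t in Icc (x 0) (x (Fin.last N)), ‖w t‖ₑ ^ p.toReal) ^ (1 / p.toReal)
      ≤ (K ^ p.toReal * ∫⁻ t in Icc (x 0) (x (Fin.last N)), ‖g t‖ₑ ^ p.toReal)
          ^ (1 / p.toReal) :=
        ENNReal.rpow_le_rpow
          (lintegral_le_of_le_mul_comp_Linv hx hN (hg.enorm.pow_const _) hpow) (by positivity)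
    _ = K * (∫⁻ t in Icc (x 0) (x (Fin.last N)), ‖g t‖ₑ ^ p.toReal) ^ (1 / p.toReal) := by
        rw [ENNReal.mul_rpow_of_nonneg _ _ (by positivity), ← ENNReal.rpow_mul,
          mul_one_div_cancel hq.ne', ENNReal.rpow_one]

theorem norm_sub_le_of_selfRef (hx : StrictMono x) (hN : 0 < N) {p : ℝ≥0∞} [Fact (1 ≤ p)]
    {α : Fin N → ℝ → ℝ} {Λ : ℝ} (hΛ : 0 ≤ Λ)
    (hα : ∀ n, ∀ᵐ y ∂volume.restrict (Icc (x 0) (x (Fin.last N))), ‖α n y‖ ≤ Λ) {f : ℝ → ℝ}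
    {b b' h h' : Lp ℝ p (volume.restrict (Icc (x 0) (x (Fin.last N))))}
    (hh : SelfRef (volume.restrict (Icc (x 0) (x (Fin.last N)))) x α f b h)
    (hh' : SelfRef (volume.restrict (Icc (x 0) (x (Fin.last N)))) x α f b' h') :
    ‖h - h'‖ ≤ Λ * ‖(b - b') - (h - h')‖ := by
  have hαₑ : ∀ n, ∀ᵐ y ∂volume.restrict (Icc (x 0) (x (Fin.last N))),
      ‖α n y‖ₑ ≤ ENNReal.ofReal Λ := fun n =>
    (hα n).mono fun y hy => by rw [← ofReal_norm]; exact ENNReal.ofReal_le_ofReal hy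
  have hw : ∀ n, ∀ᵐ t ∂volume.restrict (Icc (x 0) (x (Fin.last N))), t ∈ subInt x n →
      (⇑h - ⇑h') t = α n (Linv x n t) * ((⇑h - ⇑h') - (⇑b - ⇑b')) (Linv x n t) := by
    intro n
    filter_upwards [hh n, hh' n] with t ht ht' htn
    simp only [Pi.sub_apply, ht htn, ht' htn]
    ring
  have hle := eLpNorm_le_mul_eLpNorm_of_eq_mul_comp_Linv (p := p) hx hN hαₑ
    (((Lp.aestronglyMeasurable h).sub (Lp.aestronglyMeasurable h')).sub
      ((Lp.aestronglyMeasurable b).sub (Lp.aestronglyMeasurable b'))) hw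
  rw [← eLpNorm_congr_ae (Lp.coeFn_sub h h'), ← eLpNorm_congr_ae ((Lp.coeFn_sub _ _).trans
    ((Lp.coeFn_sub h h').sub (Lp.coeFn_sub b b')))] at hle
  rw [norm_sub_rev (b - b'), Lp.norm_def, Lp.norm_def, ← ENNReal.toReal_ofReal hΛ,
    ← ENNReal.toReal_mul]
  exact ENNReal.toReal_mono (ENNReal.mul_ne_top ENNReal.ofReal_ne_top (Lp.eLpNorm_ne_top _)) hle

end Estimates

section IdSub

variable {E : Type*} {Λ : ℝ}

theorem norm_le_one_add_mul_norm_sub [SeminormedAddGroup E] {u v : E}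
    (h : ‖v‖ ≤ Λ * ‖u - v‖) : ‖u‖ ≤ (1 + Λ) * ‖u - v‖ := by
  have := norm_le_norm_add_norm_sub' u v
  linarith [norm_sub_rev u v]

theorem norm_le_div_one_sub_mul_norm [SeminormedAddGroup E] (hΛ₀ : 0 ≤ Λ) (hΛ₁ : Λ < 1) {u v : E}
    (h : ‖v‖ ≤ Λ * ‖u - v‖) : ‖v‖ ≤ Λ / (1 - Λ) * ‖u‖ := by
  rw [div_mul_eq_mul_div, le_div_iff₀ (by linarith)]
  nlinarith [norm_sub_le u v]

variable [NormedAddCommGroup E] {P : E → E}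

theorem antilipschitzWith_id_sub (hΛ₀ : 0 ≤ Λ)
    (hP : ∀ b b', ‖P b - P b'‖ ≤ Λ * ‖(b - b') - (P b - P b')‖) :
    AntilipschitzWith ⟨1 + Λ, by positivity⟩ fun b => b - P b :=
  AntilipschitzWith.of_le_mul_dist fun b b' => by
    rw [dist_eq_norm, dist_eq_norm, sub_sub_sub_comm]
    exact norm_le_one_add_mul_norm_sub (hP b b')

theorem lipschitzWith_of_norm_sub_le (hΛ₀ : 0 ≤ Λ) (hΛ₁ : Λ < 1)
    (hP : ∀ b b', ‖P b - P b'‖ ≤ Λ * ‖(b - b') - (P b - P b')‖) :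
    LipschitzWith ⟨Λ / (1 - Λ), div_nonneg hΛ₀ (by linarith)⟩ P :=
  LipschitzWith.of_dist_le_mul fun b b' => by
    rw [dist_eq_norm, dist_eq_norm]
    exact norm_le_div_one_sub_mul_norm hΛ₀ hΛ₁ (hP b b')

end IdSub

end FractalConvolution

open FractalConvolution

/-- For any `Λ < 1`, `(1 + Λ)‖b − (0 *_T b)‖_p ≥ ‖b‖_p`;
consequently the operator `I − P⁰₁ : b ↦ b − (0 *_T b)` is injective and has
closed range in `L^p(I)`. -/
theorem id_sub_partial_convolution_injective_closed_range
    (N : ℕ) (hN : 2 ≤ N) (x : Fin (N + 1) → ℝ) (hx : StrictMono x)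
    (μ : Measure ℝ) (hμ : μ = volume.restrict (Set.Icc (x 0) (x (Fin.last N))))
    (p : ℝ≥0∞) [Fact (1 ≤ p)]
    (α : Fin N → Lp ℝ ∞ μ)
    (Λ : ℝ) (hΛdef : Λ = ⨆ n : Fin N, ‖α n‖) (hΛ : Λ < 1)
    (P₁ : Lp ℝ p μ → Lp ℝ p μ)
    (hP₁ : ∀ b : Lp ℝ p μ, SelfRef μ x (fun n => ⇑(α n)) ⇑(0 : Lp ℝ p μ) ⇑b ⇑(P₁ b)) :
    (∀ b : Lp ℝ p μ, ‖b‖ ≤ (1 + Λ) * ‖b - P₁ b‖) ∧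
    Function.Injective (fun b : Lp ℝ p μ => b - P₁ b) ∧
    IsClosed (Set.range fun b : Lp ℝ p μ => b - P₁ b) := by
  have hN₀ : 0 < N := by omega
  have hαΛ (n : Fin N) : ‖α n‖ ≤ Λ := hΛdef ▸ le_ciSup (Finite.bddAbove_range fun n => ‖α n‖) n
  have hΛ₀ : 0 ≤ Λ := (norm_nonneg _).trans (hαΛ ⟨0, hN₀⟩)
  have hα (n : Fin N) : ∀ᵐ y ∂μ, ‖α n y‖ ≤ Λ :=
    (Lp.ae_norm_le_norm (α n)).mono fun y hy => hy.trans (hαΛ n)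
  -- `P₁ 0 = 0` is not given, but `(0, 0)` solves the same equation as `(b, P₁ b)`.
  have hzero : SelfRef μ x (fun n => ⇑(α n)) ⇑(0 : Lp ℝ p μ) ⇑(0 : Lp ℝ p μ) ⇑(0 : Lp ℝ p μ) :=
    fun n => ae_of_all _ fun t _ => by rw [sub_self, mul_zero, add_zero]
  subst hμ
  have hP (b b') := norm_sub_le_of_selfRef hx hN₀ hΛ₀ hα (hP₁ b) (hP₁ b')
  have hanti := antilipschitzWith_id_sub hΛ₀ hP
  have hlip := LipschitzWith.id.sub (lipschitzWith_of_norm_sub_le hΛ₀ hΛ hP)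
  refine ⟨fun b => ?_, hanti.injective, hanti.isClosed_range hlip.uniformContinuous⟩
  simpa using norm_le_one_add_mul_norm_sub (norm_sub_le_of_selfRef hx hN₀ hΛ₀ hα (hP₁ b) hzero)

end
end

section
/- The partial fractal convolution operator P⁰₂ : L^p(I) → L^p(I), P⁰₂(f) = f *_T 0 (1 ≤ p ≤ ∞), satisfies ‖(f *_T 0) − f‖_p ≤ Λ‖f *_T 0‖_p and ‖f‖_p ≤ (1 + Λ)‖f *_T 0‖_p for every f ∈ L^p(I). Consequently P⁰₂ is injective (f *_T 0 = 0 implies f = 0) and has closed range in L^p(I). -/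
/-!
Write `A g` for the function equal to `(αₙ ∘ Lₙ⁻¹) · (g ∘ Lₙ⁻¹)` on `Iₙ`. Since `Lₙ⁻¹` maps `Iₙ`
affinely onto `I`, the pushforward of Lebesgue measure on `Iₙ` is `|Iₙ| / |I|` times Lebesgue
measure on `I`, and these factors sum to `1`; hence `‖A g‖_p ≤ Λ ‖g‖_p` for every `p`.
The fixed-point equation says `P f - f = A (P f)`, which is the first estimate, and the second
follows by the triangle inequality. Two solutions for the same `f` differ by a fixed point of `A`,
which must vanish, so `P` is additive; the two estimates then make `P` bi-Lipschitz, hence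
injective with closed range.
-/

open MeasureTheory ENNReal

noncomputable section

open Set Function

namespace MeasureTheory

variable {α β E F ι : Type*} [MeasurableSpace α] [MeasurableSpace β]
  {ν : ι → Measure α} {m : Measure β} {φ : ι → α → β}

theorem ae_comp_of_sum_map_le (hφ : ∀ i, AEMeasurable (φ i) (ν i))
    (hmap : Measure.sum (fun i => (ν i).map (φ i)) ≤ m) {P : β → Prop} (hP : ∀ᵐ s ∂m, P s)
    (i : ι) : ∀ᵐ t ∂ν i, P (φ i t) :=
  ae_of_ae_map (hφ i) (ae_mono ((Measure.le_sum _ i).trans hmap) hP)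

theorem eLpNorm_sum_le_of_ae_enorm_le_comp [Countable ι] [NormedAddCommGroup E]
    [NormedAddCommGroup F] (hφ : ∀ i, AEMeasurable (φ i) (ν i))
    (hmap : Measure.sum (fun i => (ν i).map (φ i)) ≤ m) {k : α → E} {g : β → F}
    (hg : AEStronglyMeasurable g m) (hk : ∀ i, ∀ᵐ t ∂ν i, ‖k t‖ₑ ≤ ‖g (φ i t)‖ₑ) (p : ℝ≥0∞) :
    eLpNorm k p (Measure.sum ν) ≤ eLpNorm g p m := by
  rcases eq_or_ne p 0 with rfl | hp0
  · simp
  rcases eq_or_ne p ∞ with rfl | hptop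
  · rw [eLpNorm_exponent_top, eLpNorm_exponent_top]
    refine essSup_le_of_ae_le _ ?_
    rw [Filter.EventuallyLE, Measure.ae_sum_eq]
    refine Filter.eventually_iSup.2 fun i => ?_
    filter_upwards [hk i, ae_comp_of_sum_map_le hφ hmap (ae_le_eLpNormEssSup (f := g)) i]
      with t hkt hgt
    exact hkt.trans hgt
  rw [eLpNorm_eq_lintegral_rpow_enorm_toReal hp0 hptop,
    eLpNorm_eq_lintegral_rpow_enorm_toReal hp0 hptop]
  gcongr ?_ ^ _
  calc ∫⁻ t, ‖k t‖ₑ ^ p.toReal ∂Measure.sum ν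
      = ∑' i, ∫⁻ t, ‖k t‖ₑ ^ p.toReal ∂ν i := lintegral_sum_measure _ _
    _ ≤ ∑' i, ∫⁻ t, ‖g (φ i t)‖ₑ ^ p.toReal ∂ν i :=
      ENNReal.tsum_le_tsum fun i => lintegral_mono_ae ((hk i).mono fun t ht => by gcongr)
    _ = ∑' i, ∫⁻ s, ‖g s‖ₑ ^ p.toReal ∂(ν i).map (φ i) := by
      refine tsum_congr fun i =>
        (lintegral_map' (f := fun s => ‖g s‖ₑ ^ p.toReal) ?_ (hφ i)).symm
      exact (hg.enorm.pow_const _).mono_ac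
        (Measure.absolutelyContinuous_of_le ((Measure.le_sum _ i).trans hmap))
    _ = ∫⁻ s, ‖g s‖ₑ ^ p.toReal ∂Measure.sum (fun i => (ν i).map (φ i)) :=
      (lintegral_sum_measure _ _).symm
    _ ≤ ∫⁻ s, ‖g s‖ₑ ^ p.toReal ∂m := lintegral_mono' hmap le_rfl

theorem Lp.ae_norm_le_norm_top [NormedAddCommGroup E] {μ : Measure α} (f : Lp E ∞ μ) :
    ∀ᵐ s ∂μ, ‖f s‖ ≤ ‖f‖ := by
  simpa only [Lp.norm_def, toReal_eLpNorm (Lp.aestronglyMeasurable f)] using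
    ae_le_lpNorm_exponent_top (Lp.memLp f)

end MeasureTheory

theorem Real.map_volume_mul_add {a : ℝ} (ha : a ≠ 0) (b : ℝ) :
    Measure.map (fun y => a * y + b) volume = ENNReal.ofReal |a⁻¹| • volume := by
  have h : (fun y : ℝ => a * y + b) = (fun y => b + y) ∘ (fun y => a * y) := by
    funext y
    simp [add_comm]
  rw [h, ← Measure.map_map (measurable_const_add b) (measurable_const_mul a),
    Real.map_volume_mul_left ha, Measure.map_smul, map_add_left_eq_self]

section NormSubLe

variable {E : Type*} [SeminormedAddCommGroup E] {Λ : ℝ}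

theorem norm_le_one_add_mul_of_norm_sub_le {f v : E} (h : ‖v - f‖ ≤ Λ * ‖v‖) :
    ‖f‖ ≤ (1 + Λ) * ‖v‖ := by
  linarith [norm_le_norm_add_norm_sub' f v, norm_sub_rev f v]

theorem norm_le_inv_one_sub_mul_of_norm_sub_le {f v : E} (hΛ : Λ < 1)
    (h : ‖v - f‖ ≤ Λ * ‖v‖) : ‖v‖ ≤ (1 - Λ)⁻¹ * ‖f‖ := by
  rw [inv_mul_eq_div, le_div_iff₀ (sub_pos.2 hΛ)]
  linarith [norm_le_norm_add_norm_sub' v f]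

namespace AddMonoidHom

variable (P : E →+ E) (h : ∀ f, ‖P f - f‖ ≤ Λ * ‖P f‖)
include h

theorem antilipschitz_of_norm_map_sub_le : AntilipschitzWith (1 + Λ).toNNReal P :=
  AddMonoidHomClass.antilipschitz_of_bound P fun f =>
    (norm_le_one_add_mul_of_norm_sub_le (h f)).trans
      (mul_le_mul_of_nonneg_right (Real.le_coe_toNNReal _) (norm_nonneg _))

theorem lipschitz_of_norm_map_sub_le (hΛ : Λ < 1) : LipschitzWith (1 - Λ)⁻¹.toNNReal P :=
  AddMonoidHomClass.lipschitz_of_bound P _ fun f =>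
    norm_le_inv_one_sub_mul_of_norm_sub_le hΛ (h f)

end AddMonoidHom

end NormSubLe

section Partition

variable {N : ℕ} {x : Fin (N + 1) → ℝ}

theorem measurableSet_subInt (n : Fin N) : MeasurableSet (subInt x n) := by
  unfold subInt
  split_ifs
  exacts [measurableSet_Icc, measurableSet_Ioc]

theorem subInt_ae_eq_Ioc {μ : Measure ℝ} [NullSingletonClass μ] (n : Fin N) :
    subInt x n =ᵐ[μ] Ioc (x n.castSucc) (x n.succ) := by
  unfold subInt
  split_ifs
  exacts [Ioc_ae_eq_Icc.symm, ae_eq_refl _]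

theorem iUnion_Ioc_castSucc_succ (hx : Monotone x) :
    ⋃ n : Fin N, Ioc (x n.castSucc) (x n.succ) = Ioc (x 0) (x (Fin.last N)) := by
  rw [← hx.biUnion_Ico_Ioc_map_succ 0 (Fin.last N)]
  ext t
  simp only [mem_iUnion, mem_Ico, Fin.zero_le, true_and, exists_prop]
  constructor
  · rintro ⟨n, hn⟩
    exact ⟨n.castSucc, Fin.castSucc_lt_last n, by rwa [Fin.orderSucc_castSucc]⟩
  · rintro ⟨i, hi, ht⟩
    obtain ⟨n, rfl⟩ := Fin.exists_castSucc_eq.2 hi.ne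
    exact ⟨n, by rwa [Fin.orderSucc_castSucc] at ht⟩

theorem pairwise_disjoint_Ioc_castSucc_succ (hx : Monotone x) :
    Pairwise (Disjoint on fun n : Fin N => Ioc (x n.castSucc) (x n.succ)) := by
  intro m n hmn
  simpa only [Function.onFun, Fin.orderSucc_castSucc] using
    hx.pairwise_disjoint_on_Ioc_succ ((Fin.castSucc_injective N).ne hmn)

theorem restrict_Icc_eq_sum_restrict_subInt {μ : Measure ℝ} [NullSingletonClass μ]
    (hx : Monotone x) :
    μ.restrict (Icc (x 0) (x (Fin.last N))) = Measure.sum fun n => μ.restrict (subInt x n) := by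
  simp_rw [Measure.restrict_congr_set (subInt_ae_eq_Ioc _),
    ← Measure.restrict_congr_set Ioc_ae_eq_Icc, ← iUnion_Ioc_castSucc_succ hx]
  exact Measure.restrict_iUnion (pairwise_disjoint_Ioc_castSucc_succ hx) fun _ => measurableSet_Ioc

theorem Linv_eq_mul_add (n : Fin N) : Linv x n = fun y =>
    (x (Fin.last N) - x 0) / (x n.succ - x n.castSucc) * y +
      (x 0 - (x (Fin.last N) - x 0) / (x n.succ - x n.castSucc) * x n.castSucc) := by
  funext y
  unfold Linv
  ring

theorem measurable_Linv (n : Fin N) : Measurable (Linv x n) := by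
  rw [Linv_eq_mul_add]
  fun_prop

theorem subInt_subset_Icc (n : Fin N) : subInt x n ⊆ Icc (x n.castSucc) (x n.succ) := by
  unfold subInt
  split_ifs
  exacts [subset_rfl, Ioc_subset_Icc_self]

theorem mapsTo_Linv_subInt (hx : StrictMono x) (n : Fin N) :
    MapsTo (Linv x n) (subInt x n) (Icc (x 0) (x (Fin.last N))) := by
  intro t ht
  obtain ⟨ht₀, ht₁⟩ := subInt_subset_Icc n ht
  have hn : 0 < x n.succ - x n.castSucc := sub_pos.2 (hx Fin.castSucc_lt_succ)
  have hI : 0 ≤ x (Fin.last N) - x 0 := sub_nonneg.2 (hx.monotone (Fin.zero_le _))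
  have hratio : (t - x n.castSucc) / (x n.succ - x n.castSucc) ∈ Icc (0 : ℝ) 1 :=
    ⟨div_nonneg (by linarith) hn.le, (div_le_one hn).2 (by linarith)⟩
  have hL : Linv x n t = x 0 + (t - x n.castSucc) / (x n.succ - x n.castSucc) *
      (x (Fin.last N) - x 0) := by
    unfold Linv
    ring
  have h0 := mul_nonneg hratio.1 hI
  have h1 := mul_le_of_le_one_left hI hratio.2
  rw [hL]
  constructor <;> linarith

theorem map_Linv_restrict_subInt_le (hx : StrictMono x) (n : Fin N) :
    (volume.restrict (subInt x n)).map (Linv x n) ≤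
      ENNReal.ofReal ((x n.succ - x n.castSucc) / (x (Fin.last N) - x 0)) •
        volume.restrict (Icc (x 0) (x (Fin.last N))) := by
  have hn : x n.castSucc < x n.succ := hx Fin.castSucc_lt_succ
  have ha : 0 < (x (Fin.last N) - x 0) / (x n.succ - x n.castSucc) :=
    div_pos (sub_pos.2 ((hx.monotone (Fin.zero_le _)).trans_lt
      (hn.trans_le (hx.monotone (Fin.le_last _))))) (sub_pos.2 hn)
  calc (volume.restrict (subInt x n)).map (Linv x n)
      ≤ (volume.restrict (Linv x n ⁻¹' Icc (x 0) (x (Fin.last N)))).map (Linv x n) :=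
        Measure.map_mono (Measure.restrict_mono (mapsTo_Linv_subInt hx n) le_rfl)
          (measurable_Linv n)
    _ = (volume.map (Linv x n)).restrict (Icc (x 0) (x (Fin.last N))) :=
        (Measure.restrict_map (measurable_Linv n) measurableSet_Icc).symm
    _ = _ := by
        rw [Linv_eq_mul_add n, Real.map_volume_mul_add ha.ne', Measure.restrict_smul,
          abs_of_pos (inv_pos.2 ha), inv_div]

theorem sum_map_Linv_restrict_subInt_le (hx : StrictMono x) :
    Measure.sum (fun n => (volume.restrict (subInt x n)).map (Linv x n)) ≤
      volume.restrict (Icc (x 0) (x (Fin.last N))) := by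
  rcases N with _ | M
  · simp
  have hsum : ∑ n : Fin (M + 1), (x n.succ - x n.castSucc) = x (Fin.last (M + 1)) - x 0 := by
    have h := Fin.sum_Iic_sub (Fin.last M) x
    rwa [Fin.succ_last, ← Fin.top_eq_last M, Finset.Iic_top] at h
  have hI : 0 < x (Fin.last (M + 1)) - x 0 := sub_pos.2 (hx Fin.last_pos)
  rw [Measure.sum_fintype]
  calc ∑ n, (volume.restrict (subInt x n)).map (Linv x n)
      ≤ ∑ n : Fin (M + 1),
          ENNReal.ofReal ((x n.succ - x n.castSucc) / (x (Fin.last (M + 1)) - x 0)) •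
            volume.restrict (Icc (x 0) (x (Fin.last (M + 1)))) :=
        Finset.sum_le_sum fun n _ => map_Linv_restrict_subInt_le hx n
    _ = volume.restrict (Icc (x 0) (x (Fin.last (M + 1)))) := by
        rw [← Finset.sum_smul, ← ENNReal.ofReal_sum_of_nonneg
          fun n _ => div_nonneg (sub_pos.2 (hx Fin.castSucc_lt_succ)).le hI.le,
          ← Finset.sum_div, hsum, div_self hI.ne', ENNReal.ofReal_one, one_smul]

theorem restrict_subInt_le_restrict_Icc {μ : Measure ℝ} [NullSingletonClass μ] (hx : Monotone x)
    (n : Fin N) : μ.restrict (subInt x n) ≤ μ.restrict (Icc (x 0) (x (Fin.last N))) :=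
  restrict_Icc_eq_sum_restrict_subInt (μ := μ) hx ▸ Measure.le_sum _ n

theorem ae_restrict_subInt_comp_Linv (hx : StrictMono x) {P : ℝ → Prop}
    (hP : ∀ᵐ s ∂volume.restrict (Icc (x 0) (x (Fin.last N))), P s) (n : Fin N) :
    ∀ᵐ t ∂volume.restrict (subInt x n), P (Linv x n t) :=
  ae_comp_of_sum_map_le (fun n => (measurable_Linv n).aemeasurable)
    (sum_map_Linv_restrict_subInt_le hx) hP n

theorem eLpNorm_le_of_ae_eq_mul_comp_Linv (hx : StrictMono x) {a : Fin N → ℝ → ℝ} {Λ : ℝ}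
    (ha : ∀ n, ∀ᵐ s ∂volume.restrict (Icc (x 0) (x (Fin.last N))), ‖a n s‖ ≤ Λ) {k g : ℝ → ℝ}
    (hg : AEStronglyMeasurable g (volume.restrict (Icc (x 0) (x (Fin.last N)))))
    (hk : ∀ n, ∀ᵐ t ∂volume.restrict (subInt x n), k t = a n (Linv x n t) * g (Linv x n t))
    (p : ℝ≥0∞) :
    eLpNorm k p (volume.restrict (Icc (x 0) (x (Fin.last N)))) ≤
      ‖Λ‖ₑ * eLpNorm g p (volume.restrict (Icc (x 0) (x (Fin.last N)))) := by
  rw [← eLpNorm_const_smul]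
  conv_lhs => rw [restrict_Icc_eq_sum_restrict_subInt hx.monotone]
  refine eLpNorm_sum_le_of_ae_enorm_le_comp (fun n => (measurable_Linv n).aemeasurable)
    (sum_map_Linv_restrict_subInt_le hx) (hg.const_smul Λ) (fun n => ?_) p
  filter_upwards [hk n, ae_restrict_subInt_comp_Linv hx (ha n) n] with t hkt hat
  rw [hkt, enorm_le_iff_norm_le, Pi.smul_apply, smul_eq_mul, norm_mul, norm_mul]
  exact mul_le_mul_of_nonneg_right (hat.trans (le_abs_self Λ)) (norm_nonneg _)

end Partition

/-- The fixed-point equation of `T_{f,0}`, required on each piece `I n` for Lebesgue measure. -/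
def SelfRefZero {N : ℕ} (x : Fin (N + 1) → ℝ) (a : Fin N → ℝ → ℝ) (f h : ℝ → ℝ) : Prop :=
  ∀ n, ∀ᵐ t ∂volume.restrict (subInt x n), h t = f t + a n (Linv x n t) * h (Linv x n t)

section SelfRefZero

variable {N : ℕ} {x : Fin (N + 1) → ℝ} {a : Fin N → ℝ → ℝ}

theorem SelfRef.selfRefZero (hx : StrictMono x) {f b h : ℝ → ℝ}
    (hh : SelfRef (volume.restrict (Icc (x 0) (x (Fin.last N)))) x a f b h)
    (hb : b =ᵐ[volume.restrict (Icc (x 0) (x (Fin.last N)))] 0) : SelfRefZero x a f h := by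
  intro n
  filter_upwards [ae_mono (restrict_subInt_le_restrict_Icc hx.monotone n) (hh n),
    ae_restrict_mem (measurableSet_subInt n), ae_restrict_subInt_comp_Linv hx hb n]
    with t ht hmem hbt
  rw [ht hmem, hbt, Pi.zero_apply, sub_zero]

variable {p : ℝ≥0∞}

theorem SelfRefZero.sub (hx : StrictMono x)
    {f₁ f₂ h₁ h₂ : Lp ℝ p (volume.restrict (Icc (x 0) (x (Fin.last N))))}
    (hh₁ : SelfRefZero x a f₁ h₁) (hh₂ : SelfRefZero x a f₂ h₂) :
    SelfRefZero x a ⇑(f₁ - f₂) ⇑(h₁ - h₂) := by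
  intro n
  have hsub (u v : Lp ℝ p (volume.restrict (Icc (x 0) (x (Fin.last N))))) :=
    ae_mono (restrict_subInt_le_restrict_Icc hx.monotone n) (Lp.coeFn_sub u v)
  filter_upwards [hh₁ n, hh₂ n, hsub f₁ f₂, hsub h₁ h₂,
    ae_restrict_subInt_comp_Linv hx (Lp.coeFn_sub h₁ h₂) n] with t e₁ e₂ ef eh ehL
  simp only [ef, eh, ehL, Pi.sub_apply, e₁, e₂]
  ring

variable {Λ : ℝ} (hx : StrictMono x) (hΛ₀ : 0 ≤ Λ)
  (ha : ∀ n, ∀ᵐ s ∂volume.restrict (Icc (x 0) (x (Fin.last N))), ‖a n s‖ ≤ Λ)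
include hx hΛ₀ ha

theorem SelfRefZero.norm_sub_le {f h : Lp ℝ p (volume.restrict (Icc (x 0) (x (Fin.last N))))}
    (hh : SelfRefZero x a f h) : ‖h - f‖ ≤ Λ * ‖h‖ := by
  have hk : ∀ n, ∀ᵐ t ∂volume.restrict (subInt x n),
      (h - f : Lp ℝ p _) t = a n (Linv x n t) * h (Linv x n t) := by
    intro n
    filter_upwards [hh n, ae_mono (restrict_subInt_le_restrict_Icc hx.monotone n)
      (Lp.coeFn_sub h f)] with t ht hsub
    rw [hsub, Pi.sub_apply, ht, add_sub_cancel_left]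
  have hle := eLpNorm_le_of_ae_eq_mul_comp_Linv hx ha (Lp.aestronglyMeasurable h) hk p
  rw [Lp.norm_def, Lp.norm_def]
  conv_rhs => rw [← Real.norm_of_nonneg hΛ₀, ← toReal_enorm, ← ENNReal.toReal_mul]
  exact ENNReal.toReal_mono (ENNReal.mul_ne_top enorm_ne_top (Lp.eLpNorm_ne_top h)) hle

theorem SelfRefZero.unique [Fact (1 ≤ p)] (hΛ : Λ < 1)
    {f h₁ h₂ : Lp ℝ p (volume.restrict (Icc (x 0) (x (Fin.last N))))}
    (hh₁ : SelfRefZero x a f h₁) (hh₂ : SelfRefZero x a f h₂) : h₁ = h₂ := by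
  have hd := hh₁.sub hx hh₂
  rw [sub_self] at hd
  have hcontr := hd.norm_sub_le hx hΛ₀ ha
  rw [sub_zero] at hcontr
  rw [← sub_eq_zero, ← norm_le_zero_iff]
  nlinarith [norm_nonneg (h₁ - h₂)]

end SelfRefZero

theorem partial_convolution_null_base_properties_general
    (N : ℕ) (x : Fin (N + 1) → ℝ) (hx : StrictMono x)
    (μ : Measure ℝ) (hμ : μ = volume.restrict (Set.Icc (x 0) (x (Fin.last N))))
    (p : ℝ≥0∞) [Fact (1 ≤ p)]
    (α : Fin N → Lp ℝ ∞ μ)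
    (Λ : ℝ) (hΛdef : Λ = ⨆ n : Fin N, ‖α n‖) (hΛ : Λ < 1)
    (P₂ : Lp ℝ p μ → Lp ℝ p μ)
    (hP₂ : ∀ f : Lp ℝ p μ, SelfRef μ x (fun n => ⇑(α n)) ⇑f ⇑(0 : Lp ℝ p μ) ⇑(P₂ f)) :
    (∀ f : Lp ℝ p μ, ‖P₂ f - f‖ ≤ Λ * ‖P₂ f‖) ∧
    (∀ f : Lp ℝ p μ, ‖f‖ ≤ (1 + Λ) * ‖P₂ f‖) ∧
    Function.Injective P₂ ∧
    IsClosed (Set.range P₂) := by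
  subst hμ
  have hΛ₀ : 0 ≤ Λ := hΛdef ▸ Real.iSup_nonneg fun n => norm_nonneg _
  have hα (n : Fin N) : ∀ᵐ s ∂volume.restrict (Icc (x 0) (x (Fin.last N))), ‖α n s‖ ≤ Λ :=
    (Lp.ae_norm_le_norm_top (α n)).mono fun s hs =>
      hs.trans (hΛdef ▸ le_ciSup (f := fun n => ‖α n‖) (Finite.bddAbove_range _) n)
  have hself (f : Lp ℝ p _) : SelfRefZero x (fun n => α n) f (P₂ f) :=
    (hP₂ f).selfRefZero hx (Lp.coeFn_zero ..)
  have hcontr (f : Lp ℝ p _) : ‖P₂ f - f‖ ≤ Λ * ‖P₂ f‖ := (hself f).norm_sub_le hx hΛ₀ hα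
  let P : Lp ℝ p _ →+ Lp ℝ p _ := AddMonoidHom.ofMapSub P₂ fun f g =>
    (hself (f - g)).unique hx hΛ₀ hα hΛ ((hself f).sub hx (hself g))
  have hanti := P.antilipschitz_of_norm_map_sub_le hcontr
  exact ⟨hcontr, fun f => norm_le_one_add_mul_of_norm_sub_le (hcontr f), hanti.injective,
    hanti.isClosed_range (P.lipschitz_of_norm_map_sub_le hcontr hΛ).uniformContinuous⟩

/-- The operator `P⁰₂ f = f *_T 0` satisfies
`‖(f *_T 0) − f‖_p ≤ Λ‖f *_T 0‖_p` and `‖f‖_p ≤ (1 + Λ)‖f *_T 0‖_p`; consequently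
`P⁰₂` is injective and has closed range in `L^p(I)`. -/
theorem partial_convolution_null_base_properties
    (N : ℕ) (hN : 2 ≤ N) (x : Fin (N + 1) → ℝ) (hx : StrictMono x)
    (μ : Measure ℝ) (hμ : μ = volume.restrict (Set.Icc (x 0) (x (Fin.last N))))
    (p : ℝ≥0∞) [Fact (1 ≤ p)]
    (α : Fin N → Lp ℝ ∞ μ)
    (Λ : ℝ) (hΛdef : Λ = ⨆ n : Fin N, ‖α n‖) (hΛ : Λ < 1)
    (P₂ : Lp ℝ p μ → Lp ℝ p μ)
    (hP₂ : ∀ f : Lp ℝ p μ, SelfRef μ x (fun n => ⇑(α n)) ⇑f ⇑(0 : Lp ℝ p μ) ⇑(P₂ f)) :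
    (∀ f : Lp ℝ p μ, ‖P₂ f - f‖ ≤ Λ * ‖P₂ f‖) ∧
    (∀ f : Lp ℝ p μ, ‖f‖ ≤ (1 + Λ) * ‖P₂ f‖) ∧
    Function.Injective P₂ ∧
    IsClosed (Set.range P₂) :=
  partial_convolution_null_base_properties_general N x hx μ hμ p α Λ hΛdef hΛ P₂ hP₂

end
end
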